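/- Let (ξᵢ)_{i≥1} be i.i.d. real random variables whose common distribution is symmetric (ξ₁ and −ξ₁ have the same law) and atomless. Then P(S_n ≥ 0) = 1/2 for every n ≥ 1, and the generating function of the first weak ascending ladder epoch T₁ := inf{n ≥ 1 : S_n ≥ S_j for all 0 ≤ j < n} satisfies E[s^{T₁} 1_{T₁ < ∞}] = 1 − √(1 − s) for every s ∈ [0,1). -/

import Mathlib

/-!
Everything is transported to the canonical space `ℕ → ℝ` with the product law `μ^ℕ` of the
increments. Let `aₖ = P(T₁ = k)` and `ρₙ = P(Sₙ < Sⱼ for all j < n)`. Reversing the first `n`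
increments preserves `μ^ℕ` and shows that `ρₙ` is the probability that no weak ascending ladder
epoch occurs in `[1, n]`, so `ρₙ = 1 - ∑_{k ≤ n} aₖ`. Splitting at the first strict descending
ladder epoch, which depends only on the increments before it, gives the renewal equation
`ρₙ = ∑_{k ≤ n} bₖ ρ_{n-k}` with `bₖ` the law of that epoch; negating the increments and using
that the walk almost surely has no ties shows `bₖ = aₖ`. With `A = ∑ aₖ sᵏ` and `R = ∑ ρₙ sⁿ`
these read `(1 - s) R = 1 - A` and `A R = R - 1`, so `(1 - A)² = 1 - s` with `1 - A ≥ 0`.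
The same symmetry gives `P(Sₙ ≥ 0) = P(Sₙ ≤ 0)`, while `P(Sₙ = 0) = 0`.
-/

open MeasureTheory ProbabilityTheory Finset

namespace RandomWalk

def IsFirstHit (p : ℕ → Prop) (k : ℕ) : Prop :=
  1 ≤ k ∧ p k ∧ ∀ m, 1 ≤ m → m < k → ¬ p m

/-- `0` when `p` holds at no positive time (`sInf ∅ = 0`). -/
noncomputable def firstHitTime (p : ℕ → Prop) : ℕ := sInf {m | 1 ≤ m ∧ p m}

section FirstHit

variable {p : ℕ → Prop}

lemma IsFirstHit.eq {k k' : ℕ} (hk : IsFirstHit p k) (hk' : IsFirstHit p k') : k = k' := by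
  by_contra hne
  rcases Nat.lt_or_gt_of_ne hne with h | h
  · exact hk'.2.2 k hk.1 h hk.2.1
  · exact hk.2.2 k' hk'.1 h hk'.2.1

lemma exists_isFirstHit_of_le {n : ℕ} (h : ∃ m, 1 ≤ m ∧ m ≤ n ∧ p m) :
    ∃ k ≤ n, IsFirstHit p k := by
  classical
  have hex : ∃ m, 1 ≤ m ∧ p m := h.imp fun m hm => ⟨hm.1, hm.2.2⟩
  obtain ⟨m, hm1, hmn, hpm⟩ := h
  refine ⟨Nat.find hex, (Nat.find_min' hex ⟨hm1, hpm⟩).trans hmn, (Nat.find_spec hex).1,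
    (Nat.find_spec hex).2, fun j hj hjk hpj => Nat.find_min hex hjk ⟨hj, hpj⟩⟩

lemma forall_not_iff_not_exists_isFirstHit (n : ℕ) :
    (∀ m, 1 ≤ m → m ≤ n → ¬ p m) ↔ ¬ ∃ k ∈ range (n + 1), IsFirstHit p k := by
  constructor
  · rintro h ⟨k, hk, hk1, hpk, -⟩
    exact h k hk1 (Nat.lt_succ_iff.mp (mem_range.mp hk)) hpk
  · intro h m hm1 hmn hpm
    obtain ⟨k, hkn, hk⟩ := exists_isFirstHit_of_le ⟨m, hm1, hmn, hpm⟩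
    exact h ⟨k, mem_range.mpr (Nat.lt_succ_of_le hkn), hk⟩

lemma firstHitTime_eq_iff {k : ℕ} (hk : 1 ≤ k) : firstHitTime p = k ↔ IsFirstHit p k := by
  rw [firstHitTime]
  constructor
  · rintro rfl
    have hne : {m | 1 ≤ m ∧ p m}.Nonempty := by
      by_contra h
      rw [Set.not_nonempty_iff_eq_empty.mp h, Nat.sInf_empty] at hk
      exact absurd hk (by norm_num)
    exact ⟨(Nat.sInf_mem hne).1, (Nat.sInf_mem hne).2,
      fun m hm hlt hpm => (Nat.sInf_le (show m ∈ {m | 1 ≤ m ∧ p m} from ⟨hm, hpm⟩)).not_gt hlt⟩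
  · rintro ⟨hk1, hpk, hmin⟩
    refine le_antisymm (Nat.sInf_le ⟨hk1, hpk⟩) (le_of_not_gt fun hlt => ?_)
    have hmem := Nat.sInf_mem (⟨k, hk1, hpk⟩ : {m | 1 ≤ m ∧ p m}.Nonempty)
    exact hmin _ hmem.1 hlt hmem.2

end FirstHit

section Measurability

variable {α : Type*} {mα : MeasurableSpace α} {p : α → ℕ → Prop}

lemma measurableSet_isFirstHit {k : ℕ} (hp : ∀ j ≤ k, MeasurableSet {a | p a j}) :
    MeasurableSet {a | IsFirstHit (p a) k} := by
  have : {a | IsFirstHit (p a) k} =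
      {_a | 1 ≤ k} ∩ {a | p a k} ∩ ⋂ m, ⋂ (_ : 1 ≤ m), ⋂ (_ : m < k), {a | p a m}ᶜ := by
    ext a
    simp [IsFirstHit, and_assoc]
  rw [this]
  exact (MeasurableSet.const _).inter (hp k le_rfl) |>.inter <|
    .iInter fun m => .iInter fun _ => .iInter fun hm => (hp m hm.le).compl

lemma measurable_firstHitTime (hp : ∀ j, MeasurableSet {a | p a j}) :
    Measurable fun a => firstHitTime (p a) := by
  refine measurable_to_countable' fun k => ?_
  rcases Nat.eq_zero_or_pos k with rfl | hk
  · have : (fun a => firstHitTime (p a)) ⁻¹' {0} = ⋂ m, ⋂ (_ : 1 ≤ m), {a | p a m}ᶜ := by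
      ext a
      simp [firstHitTime, Nat.sInf_eq_zero, Set.eq_empty_iff_forall_notMem]
    rw [this]
    exact .iInter fun m => .iInter fun _ => (hp m).compl
  · have : (fun a => firstHitTime (p a)) ⁻¹' {k} = {a | IsFirstHit (p a) k} := by
      ext a
      exact firstHitTime_eq_iff hk
    rw [this]
    exact measurableSet_isFirstHit fun j _ => hp j

lemma pairwiseDisjoint_isFirstHit (s : Set ℕ) :
    s.PairwiseDisjoint fun k => {a | IsFirstHit (p a) k} :=
  fun _ _ _ _ hij => Set.disjoint_left.mpr fun _ hi hj => hij (IsFirstHit.eq hi hj)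

lemma measure_forall_not_add_sum_isFirstHit (μ : Measure α) [IsProbabilityMeasure μ]
    (hp : ∀ j, MeasurableSet {a | p a j}) (n : ℕ) :
    μ {a | ∀ m, 1 ≤ m → m ≤ n → ¬ p a m} + ∑ k ∈ range (n + 1), μ {a | IsFirstHit (p a) k} =
      1 := by
  have hU : MeasurableSet (⋃ k ∈ range (n + 1), {a | IsFirstHit (p a) k}) :=
    .biUnion (countable_toSet _) fun k _ => measurableSet_isFirstHit fun j _ => hp j
  have hcompl : {a | ∀ m, 1 ≤ m → m ≤ n → ¬ p a m} =
      (⋃ k ∈ range (n + 1), {a | IsFirstHit (p a) k})ᶜ := by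
    ext a
    simp only [forall_not_iff_not_exists_isFirstHit, Set.mem_compl_iff, Set.mem_iUnion,
      Set.mem_ofPred_eq, exists_prop]
  rw [hcompl, ← measure_biUnion_finset (pairwiseDisjoint_isFirstHit _)
    fun k _ => measurableSet_isFirstHit fun j _ => hp j, add_comm, measure_add_measure_compl hU,
    measure_univ]

end Measurability

def IsWeakAscLadder (g : ℕ → ℝ) (m : ℕ) : Prop := ∀ j < m, g j ≤ g m

def IsStrictDescLadder (g : ℕ → ℝ) (m : ℕ) : Prop := ∀ j < m, g m < g j

section Paths

variable {f : ℕ → ℝ} {n : ℕ}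

/-- `g` is the path `f` read backwards from time `n`. -/
lemma forall_not_isWeakAscLadder_iff_isStrictDescLadder {g : ℕ → ℝ}
    (hg : ∀ m ≤ n, g m = f n - f (n - m)) :
    (∀ m, 1 ≤ m → m ≤ n → ¬ IsWeakAscLadder g m) ↔ IsStrictDescLadder f n := by
  constructor
  · intro h j hj
    refine lt_of_not_ge fun hle => ?_
    obtain ⟨k, hk, hmin⟩ := (range n).exists_min_image f ⟨j, mem_range.mpr hj⟩
    have hkn := mem_range.mp hk
    refine h (n - k) (by omega) (by omega) fun i hi => ?_
    rw [hg i (by omega), hg (n - k) (by omega), Nat.sub_sub_self hkn.le]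
    rcases Nat.eq_zero_or_pos i with rfl | hi0
    · linarith [hmin j (mem_range.mpr hj), show f (n - 0) = f n from rfl]
    · linarith [hmin (n - i) (mem_range.mpr (by omega))]
  · intro h m hm1 hmn hw
    have h0 := hw 0 hm1
    rw [hg 0 (Nat.zero_le n), hg m hmn, Nat.sub_zero] at h0
    linarith [h (n - m) (by omega)]

lemma isStrictDescLadder_iff_exists_isFirstHit (hn : 1 ≤ n) :
    IsStrictDescLadder f n ↔ ∃ k ∈ range (n + 1),
      IsFirstHit (IsStrictDescLadder f) k ∧
        IsStrictDescLadder (fun j => f (k + j) - f k) (n - k) := by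
  constructor
  · intro h
    obtain ⟨k, hkn, hk⟩ := exists_isFirstHit_of_le ⟨n, hn, le_rfl, h⟩
    refine ⟨k, mem_range.mpr (Nat.lt_succ_of_le hkn), hk, fun j hj => ?_⟩
    dsimp only
    rw [Nat.add_sub_cancel' hkn]
    linarith [h (k + j) (by omega)]
  · rintro ⟨k, hk, ⟨hk1, hfk, -⟩, hshift⟩ j hj
    have hkn : k ≤ n := Nat.lt_succ_iff.mp (mem_range.mp hk)
    have hnk : f n ≤ f k := by
      rcases hkn.eq_or_lt with rfl | hlt
      · exact le_rfl
      · have h0 := hshift 0 (by omega)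
        dsimp only at h0
        rw [Nat.add_sub_cancel' hkn, Nat.add_zero] at h0
        linarith
    rcases lt_or_ge j k with hjk | hjk
    · exact hnk.trans_lt (hfk j hjk)
    · have h' := hshift (j - k) (by omega)
      dsimp only at h'
      rw [Nat.add_sub_cancel' hkn, Nat.add_sub_cancel' hjk] at h'
      linarith

lemma isWeakAscLadder_iff_isStrictDescLadder_neg (hf : ∀ j < n, f j ≠ f n) :
    IsWeakAscLadder f n ↔ IsStrictDescLadder (-f) n := by
  simp only [IsWeakAscLadder, IsStrictDescLadder, Pi.neg_apply, neg_lt_neg_iff]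
  exact forall₂_congr fun j hj => (hf j hj).le_iff_lt

end Paths

section PathMeasurability

variable {α : Type*} {mα : MeasurableSpace α} {g : α → ℕ → ℝ} {n : ℕ}

lemma measurableSet_isWeakAscLadder (hg : ∀ j ≤ n, Measurable fun a => g a j) :
    MeasurableSet {a | IsWeakAscLadder (g a) n} := by
  simp only [IsWeakAscLadder, Set.ofPred_forall]
  exact .iInter fun j => .iInter fun hj => measurableSet_le (hg j hj.le) (hg n le_rfl)

lemma measurableSet_isStrictDescLadder (hg : ∀ j ≤ n, Measurable fun a => g a j) :
    MeasurableSet {a | IsStrictDescLadder (g a) n} := by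
  simp only [IsStrictDescLadder, Set.ofPred_forall]
  exact .iInter fun j => .iInter fun hj => measurableSet_lt (hg n le_rfl) (hg j hj.le)

end PathMeasurability

lemma IndepFun.measure_add_eq_zero {Ω : Type*} {mΩ : MeasurableSpace Ω} {P : Measure Ω}
    [IsFiniteMeasure P] {X Y : Ω → ℝ} (hX : Measurable X) (hY : Measurable Y)
    (hXY : IndepFun X Y P) (hatom : ∀ a, P (X ⁻¹' {a}) = 0) (c : ℝ) :
    P {ω | X ω + Y ω = c} = 0 := by
  have hs : MeasurableSet {p : ℝ × ℝ | p.1 + p.2 = c} :=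
    measurableSet_eq_fun (by fun_prop) measurable_const
  have hslice (y : ℝ) : (fun x => (x, y)) ⁻¹' {p : ℝ × ℝ | p.1 + p.2 = c} = {c - y} := by
    ext x
    simp [eq_sub_iff_add_eq]
  calc P {ω | X ω + Y ω = c}
      = P.map (fun ω => (X ω, Y ω)) {p | p.1 + p.2 = c} := by
        rw [Measure.map_apply (hX.prodMk hY) hs]
        rfl
    _ = ∫⁻ y, P.map X {c - y} ∂(P.map Y) := by
        rw [(indepFun_iff_map_prod_eq_prod_map_map hX.aemeasurable hY.aemeasurable).mp hXY,
          Measure.prod_apply_symm hs]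
        simp only [hslice]
    _ = 0 := by simp [Measure.map_apply hX (measurableSet_singleton _), hatom]

lemma integral_comp_eq_tsum {α : Type*} {mα : MeasurableSpace α} (P : Measure α)
    [IsFiniteMeasure P] {τ : α → ℕ} (hτ : Measurable τ) {G : ℕ → ℝ} {C : ℝ}
    (hG : ∀ k, ‖G k‖ ≤ C) :
    ∫ a, G (τ a) ∂P = ∑' k, P.real (τ ⁻¹' {k}) * G k := by
  rw [← integral_map hτ.aemeasurable measurable_from_top.aestronglyMeasurable,
    integral_countable (.of_bound measurable_from_top.aestronglyMeasurable C (ae_of_all _ hG))]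
  simp [map_measureReal_apply hτ (measurableSet_singleton _)]

section IidSequence

variable {E : Type*} {mE : MeasurableSpace E} (μ : Measure E) [IsProbabilityMeasure μ]

lemma measurePreserving_comp_infinitePi {f : ℕ → ℕ} (hf : Function.Injective f) :
    MeasurePreserving (fun (x : ℕ → E) i => x (f i))
      (Measure.infinitePi fun _ => μ) (Measure.infinitePi fun _ => μ) :=
  ⟨by fun_prop, Measure.map_infinitePi_infinitePi_of_inj hf⟩

lemma measurable_coord_iSup {s : Set ℕ} {i : ℕ} (hi : i ∈ s) :
    Measurable[⨆ j ∈ s, mE.comap fun x : ℕ → E => x j] fun x => x i :=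
  Measurable.of_comap_le (le_iSup₂ (f := fun j (_ : j ∈ s) => mE.comap fun x : ℕ → E => x j) i hi)

lemma measure_inter_shift_preimage {k : ℕ} {A B : Set (ℕ → E)}
    (hA : MeasurableSet[⨆ i ∈ Set.Iio k, mE.comap fun x : ℕ → E => x i] A)
    (hB : MeasurableSet B) :
    Measure.infinitePi (fun _ => μ) (A ∩ (fun x i => x (k + i)) ⁻¹' B) =
      Measure.infinitePi (fun _ => μ) A * Measure.infinitePi (fun _ => μ) B := by
  have hcoord : iIndepFun (fun i (x : ℕ → E) => x i) (Measure.infinitePi fun _ => μ) :=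
    iIndepFun_infinitePi (X := fun _ => id) fun _ => measurable_id
  have hindep := indep_iSup_of_disjoint (fun i => (measurable_pi_apply i).comap_le) hcoord.iIndep
    (Set.Iio_disjoint_Ici le_rfl : Disjoint (Set.Iio k) (Set.Ici k))
  have hshift : Measurable[⨆ i ∈ Set.Ici k, mE.comap fun x : ℕ → E => x i]
      fun (x : ℕ → E) i => x (k + i) :=
    @measurable_pi_lambda _ _ _ (_) _ _ fun i =>
      measurable_coord_iSup (Set.mem_Ici.mpr (Nat.le_add_right k i))
  rw [(Indep_iff _ _ _).mp hindep A _ hA (hshift hB),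
    (measurePreserving_comp_infinitePi μ (add_right_injective k)).measure_preimage
      hB.nullMeasurableSet]

end IidSequence

def partialSum (x : ℕ → ℝ) (n : ℕ) : ℝ := ∑ i ∈ range n, x i

def reflectBelow (n i : ℕ) : ℕ := if i < n then n - 1 - i else i

lemma reflectBelow_injective (n : ℕ) : Function.Injective (reflectBelow n) := by
  intro a b h
  simp only [reflectBelow] at h
  split_ifs at h <;> omega

section PartialSums

variable (x : ℕ → ℝ)

lemma partialSum_shift (k j : ℕ) :
    partialSum (fun i => x (k + i)) j = partialSum x (k + j) - partialSum x k := by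
  simp only [partialSum, sum_range_add]
  ring

lemma partialSum_neg : partialSum (-x) = -partialSum x := by
  ext n
  simp [partialSum]

lemma partialSum_reflectBelow {n m : ℕ} (hm : m ≤ n) :
    partialSum (fun i => x (reflectBelow n i)) m = partialSum x n - partialSum x (n - m) := by
  have hsplit := sum_range_add x (n - m) m
  rw [Nat.sub_add_cancel hm] at hsplit
  rw [partialSum, partialSum, partialSum, hsplit, add_sub_cancel_left, ← sum_range_reflect]
  refine sum_congr rfl fun i hi => ?_
  have := mem_range.mp hi
  rw [reflectBelow, if_pos (by omega)]
  congr 1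
  omega

lemma measurable_partialSum' {m : MeasurableSpace (ℕ → ℝ)} {n : ℕ}
    (hx : ∀ i < n, Measurable[m] fun x : ℕ → ℝ => x i) :
    Measurable[m] fun x => partialSum x n :=
  Finset.measurable_sum _ fun i hi => hx i (mem_range.mp hi)

lemma measurable_partialSum (n : ℕ) : Measurable fun x : ℕ → ℝ => partialSum x n :=
  measurable_partialSum' fun i _ => measurable_pi_apply i

end PartialSums

noncomputable def ladderEpoch (x : ℕ → ℝ) : ℕ := firstHitTime (IsWeakAscLadder (partialSum x))

lemma measurable_ladderEpoch : Measurable ladderEpoch :=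
  measurable_firstHitTime fun _ => measurableSet_isWeakAscLadder fun i _ => measurable_partialSum i

section GeneratingFunction

variable {s : ℝ}

lemma summable_norm_mul_pow_of_abs_le_one {u : ℕ → ℝ} (hu : ∀ k, |u k| ≤ 1) (hs0 : 0 ≤ s)
    (hs1 : s < 1) : Summable fun k => ‖u k * s ^ k‖ :=
  (summable_geometric_of_lt_one hs0 hs1).of_nonneg_of_le (fun _ => norm_nonneg _) fun k => by
    rw [norm_mul, norm_pow, Real.norm_eq_abs, Real.norm_eq_abs, abs_of_nonneg hs0]
    exact mul_le_of_le_one_left (pow_nonneg hs0 k) (hu k)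

lemma tsum_mul_pow_mul_tsum_mul_pow {u v : ℕ → ℝ} (hu : Summable fun k => ‖u k * s ^ k‖)
    (hv : Summable fun k => ‖v k * s ^ k‖) :
    (∑' k, u k * s ^ k) * ∑' k, v k * s ^ k =
      ∑' n, (∑ k ∈ range (n + 1), u k * v (n - k)) * s ^ n := by
  rw [tsum_mul_tsum_eq_tsum_sum_antidiagonal_of_summable_norm hu hv]
  refine tsum_congr fun n => ?_
  rw [Finset.Nat.sum_antidiagonal_eq_sum_range_succ_mk, sum_mul]
  refine sum_congr rfl fun k hk => ?_
  have hkn : k ≤ n := Nat.lt_succ_iff.mp (mem_range.mp hk)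
  rw [show s ^ n = s ^ k * s ^ (n - k) by rw [← pow_add, Nat.add_sub_cancel' hkn]]
  ring

theorem tsum_mul_pow_eq_one_sub_sqrt {a ρ : ℕ → ℝ} (ha : ∀ k, 0 ≤ a k) (ha0 : a 0 = 0)
    (hρ : ∀ n, 0 ≤ ρ n) (htail : ∀ n, ρ n = 1 - ∑ k ∈ range (n + 1), a k)
    (hrenewal : ∀ n, 1 ≤ n → ρ n = ∑ k ∈ range (n + 1), a k * ρ (n - k))
    (hs0 : 0 ≤ s) (hs1 : s < 1) :
    ∑' k, a k * s ^ k = 1 - √(1 - s) := by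
  have ha1 (k : ℕ) : |a k| ≤ 1 := by
    rw [abs_of_nonneg (ha k)]
    linarith [htail k, hρ k, single_le_sum (fun i _ => ha i) (self_mem_range_succ k)]
  have hρ1 (n : ℕ) : |ρ n| ≤ 1 := by
    rw [abs_of_nonneg (hρ n), htail n]
    linarith [sum_nonneg fun k (_ : k ∈ range (n + 1)) => ha k]
  have hA := summable_norm_mul_pow_of_abs_le_one ha1 hs0 hs1
  have hR := summable_norm_mul_pow_of_abs_le_one hρ1 hs0 hs1
  have hG := summable_norm_mul_pow_of_abs_le_one (u := fun _ => 1) (fun _ => by simp) hs0 hs1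
  set A := ∑' k, a k * s ^ k
  set R := ∑' n, ρ n * s ^ n
  have hAR : A * R = R - 1 := by
    have hterm (n : ℕ) : (∑ k ∈ range (n + 1), a k * ρ (n - k)) * s ^ n =
        ρ n * s ^ n - if n = 0 then 1 else 0 := by
      rcases Nat.eq_zero_or_pos n with rfl | hn
      · simp [ha0, htail 0]
      · rw [← hrenewal n hn, if_neg hn.ne']
        ring
    rw [tsum_mul_pow_mul_tsum_mul_pow hA hR, tsum_congr hterm,
      hR.of_norm.tsum_sub (hasSum_ite_eq 0 (1 : ℝ)).summable, tsum_ite_eq]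
  have hRA : 1 - A = (1 - s) * R := by
    have hterm (n : ℕ) : (∑ k ∈ range (n + 1), a k * 1) * s ^ n = 1 * s ^ n - ρ n * s ^ n := by
      rw [htail n]
      simp only [mul_one]
      ring
    have h := tsum_mul_pow_mul_tsum_mul_pow hA hG
    rw [tsum_congr hterm, hG.of_norm.tsum_sub hR.of_norm] at h
    simp only [one_mul, tsum_geometric_of_lt_one hs0 hs1] at h
    have hs : (1 - s) ≠ 0 := by linarith
    field_simp at h
    linarith
  have hsq : (1 - A) ^ 2 = 1 - s := by
    calc (1 - A) ^ 2 = (1 - s) * (R - A * R) := by rw [sq]; nth_rewrite 1 [hRA]; ring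
      _ = 1 - s := by rw [hAR]; ring
  have hnn : 0 ≤ 1 - A := hRA ▸ mul_nonneg (by linarith)
    (tsum_nonneg fun n => mul_nonneg (hρ n) (pow_nonneg hs0 n))
  rw [← hsq, Real.sqrt_sq hnn]
  ring

end GeneratingFunction

section RandomWalkMeasure

variable (μ : Measure ℝ) [IsProbabilityMeasure μ]

lemma measurePreserving_neg_infinitePi [μ.IsNegInvariant] :
    MeasurePreserving (fun x : ℕ → ℝ => -x)
      (Measure.infinitePi fun _ => μ) (Measure.infinitePi fun _ => μ) := by
  refine ⟨measurable_neg, ?_⟩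
  have := Measure.infinitePi_map_pi (fun _ : ℕ => μ) (f := fun _ (a : ℝ) => -a)
    fun _ => measurable_neg
  rwa [funext fun _ => Measure.map_neg_eq_self μ] at this

lemma measure_partialSum_eq_partialSum_eq_zero [NullSingletonClass μ] {a b : ℕ} (hab : a < b) :
    Measure.infinitePi (fun _ => μ) {x | partialSum x a = partialSum x b} = 0 := by
  have hcoord : iIndepFun (fun i (x : ℕ → ℝ) => x i) (Measure.infinitePi fun _ => μ) :=
    iIndepFun_infinitePi (X := fun _ => id) fun _ => measurable_id
  have hindep : IndepFun (fun x : ℕ → ℝ => x a) (fun x => ∑ i ∈ Ico (a + 1) b, x i)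
      (Measure.infinitePi fun _ => μ) := by
    have := (hcoord.indepFun_finsetSum_of_notMem (fun i => measurable_pi_apply i)
      (s := Ico (a + 1) b) (i := a) (by simp)).symm
    simpa only [Finset.sum_fn] using this
  have hset : {x : ℕ → ℝ | partialSum x a = partialSum x b} =
      {x | x a + ∑ i ∈ Ico (a + 1) b, x i = 0} := by
    ext x
    rw [Set.mem_ofPred_eq, Set.mem_ofPred_eq, partialSum, partialSum,
      ← sum_range_add_sum_Ico x hab.le, sum_eq_sum_Ico_succ_bot hab]
    constructor <;> intro h <;> linarith
  rw [hset]
  refine IndepFun.measure_add_eq_zero (measurable_pi_apply a) (by fun_prop) hindep (fun t => ?_) 0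
  rw [(measurePreserving_eval_infinitePi _ a).measure_preimage
    (measurableSet_singleton t).nullMeasurableSet]
  exact measure_singleton t

lemma ae_partialSum_injective [NullSingletonClass μ] :
    ∀ᵐ x ∂(Measure.infinitePi fun _ => μ), ∀ a b, a < b → partialSum x a ≠ partialSum x b := by
  refine ae_all_iff.mpr fun a => ae_all_iff.mpr fun b => ?_
  by_cases hab : a < b
  · filter_upwards
      [measure_eq_zero_iff_ae_notMem.mp (measure_partialSum_eq_partialSum_eq_zero μ hab)]
      with x hx _ using hx
  · exact ae_of_all _ fun x h => absurd h hab

lemma measure_partialSum_nonneg [NullSingletonClass μ] [μ.IsNegInvariant] {n : ℕ} (hn : 1 ≤ n) :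
    Measure.infinitePi (fun _ => μ) {x | 0 ≤ partialSum x n} = 1 / 2 := by
  set ν := Measure.infinitePi fun _ : ℕ => μ
  have hmeas : MeasurableSet {x : ℕ → ℝ | 0 ≤ partialSum x n} :=
    measurableSet_le measurable_const (measurable_partialSum n)
  have hsymm : ν {x | partialSum x n ≤ 0} = ν {x | 0 ≤ partialSum x n} := by
    rw [← (measurePreserving_neg_infinitePi μ).measure_preimage hmeas.nullMeasurableSet]
    congr 1
    ext x
    simp [partialSum_neg]
  have hcompl : ν {x | partialSum x n ≤ 0} = ν {x | 0 ≤ partialSum x n}ᶜ := by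
    refine measure_congr (Filter.eventuallyEq_set.mpr ?_)
    filter_upwards [ae_partialSum_injective μ] with x hx
    have hne : partialSum x n ≠ 0 := fun h => hx 0 n hn (by rw [h]; simp [partialSum])
    simp only [Set.mem_ofPred_eq, Set.mem_compl_iff, not_le]
    exact ⟨fun h => h.lt_of_ne hne, le_of_lt⟩
  rw [ENNReal.eq_div_iff two_ne_zero ENNReal.ofNat_ne_top, two_mul]
  nth_rewrite 2 [← hsymm]
  rw [hcompl, measure_add_measure_compl hmeas, measure_univ]

lemma measure_forall_not_isWeakAscLadder (n : ℕ) :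
    Measure.infinitePi (fun _ => μ)
        {x | ∀ m, 1 ≤ m → m ≤ n → ¬ IsWeakAscLadder (partialSum x) m} =
      Measure.infinitePi (fun _ => μ) {x | IsStrictDescLadder (partialSum x) n} := by
  have hmeas : MeasurableSet
      {x : ℕ → ℝ | ∀ m, 1 ≤ m → m ≤ n → ¬ IsWeakAscLadder (partialSum x) m} := by
    simp only [Set.ofPred_forall]
    exact .iInter fun m => .iInter fun _ => .iInter fun _ =>
      (measurableSet_isWeakAscLadder fun j _ => measurable_partialSum j).compl
  rw [← (measurePreserving_comp_infinitePi μ (reflectBelow_injective n)).measure_preimage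
    hmeas.nullMeasurableSet]
  congr 1
  ext x
  exact forall_not_isWeakAscLadder_iff_isStrictDescLadder fun m hm => partialSum_reflectBelow x hm

lemma measure_isFirstHit_isStrictDescLadder [NullSingletonClass μ] [μ.IsNegInvariant] (k : ℕ) :
    Measure.infinitePi (fun _ => μ) {x | IsFirstHit (IsStrictDescLadder (partialSum x)) k} =
      Measure.infinitePi (fun _ => μ) {x | IsFirstHit (IsWeakAscLadder (partialSum x)) k} := by
  have hmeas : MeasurableSet {x : ℕ → ℝ | IsFirstHit (IsStrictDescLadder (partialSum x)) k} :=
    measurableSet_isFirstHit fun j _ =>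
      measurableSet_isStrictDescLadder fun i _ => measurable_partialSum i
  rw [← (measurePreserving_neg_infinitePi μ).measure_preimage hmeas.nullMeasurableSet]
  refine measure_congr (Filter.eventuallyEq_set.mpr ?_)
  filter_upwards [ae_partialSum_injective μ] with x hx
  have hladder : IsStrictDescLadder (partialSum (-x)) = IsWeakAscLadder (partialSum x) := by
    ext m
    rw [partialSum_neg]
    exact (isWeakAscLadder_iff_isStrictDescLadder_neg fun j hj => hx j m hj).symm
  simp only [Set.mem_preimage, Set.mem_ofPred_eq, hladder]

lemma measure_isStrictDescLadder_eq_sum {n : ℕ} (hn : 1 ≤ n) :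
    Measure.infinitePi (fun _ => μ) {x | IsStrictDescLadder (partialSum x) n} =
      ∑ k ∈ range (n + 1),
        Measure.infinitePi (fun _ => μ) {x | IsFirstHit (IsStrictDescLadder (partialSum x)) k} *
        Measure.infinitePi (fun _ => μ) {x | IsStrictDescLadder (partialSum x) (n - k)} := by
  set E : ℕ → Set (ℕ → ℝ) := fun k => {x | IsFirstHit (IsStrictDescLadder (partialSum x)) k}
  set B : ℕ → Set (ℕ → ℝ) := fun k => {x | IsStrictDescLadder (partialSum x) (n - k)}
  have hB (k : ℕ) : MeasurableSet (B k) :=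
    measurableSet_isStrictDescLadder fun j _ => measurable_partialSum j
  have hE (k : ℕ) : MeasurableSet[⨆ i ∈ Set.Iio k, MeasurableSpace.comap (fun x : ℕ → ℝ => x i) _]
      (E k) :=
    measurableSet_isFirstHit fun j hj => measurableSet_isStrictDescLadder fun i hi =>
      measurable_partialSum' fun l hl => measurable_coord_iSup (Set.mem_Iio.mpr (by omega))
  have hdecomp : {x | IsStrictDescLadder (partialSum x) n} =
      ⋃ k ∈ range (n + 1), E k ∩ (fun x i => x (k + i)) ⁻¹' B k := by
    ext x
    have hshift (k : ℕ) : partialSum (fun i => x (k + i)) =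
        fun j => partialSum x (k + j) - partialSum x k := funext (partialSum_shift x k)
    simp only [E, B, Set.mem_iUnion, Set.mem_inter_iff, Set.mem_preimage, Set.mem_ofPred_eq,
      hshift, exists_prop]
    exact isStrictDescLadder_iff_exists_isFirstHit hn
  rw [hdecomp, measure_biUnion_finset
    ((pairwiseDisjoint_isFirstHit _).mono fun k => Set.inter_subset_left)
    fun k _ => (measurableSet_isFirstHit fun j _ => measurableSet_isStrictDescLadder
      fun i _ => measurable_partialSum i).inter
        ((measurePreserving_comp_infinitePi μ (add_right_injective k)).measurable (hB k))]
  exact sum_congr rfl fun k _ => measure_inter_shift_preimage μ (hE k) (hB k)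

lemma measureReal_isStrictDescLadder_add_sum (n : ℕ) :
    (Measure.infinitePi fun _ => μ).real {x | IsStrictDescLadder (partialSum x) n} +
      ∑ k ∈ range (n + 1),
        (Measure.infinitePi fun _ => μ).real {x | IsFirstHit (IsWeakAscLadder (partialSum x)) k} =
      1 := by
  have h := measure_forall_not_add_sum_isFirstHit (Measure.infinitePi fun _ => μ)
    (p := fun x m => IsWeakAscLadder (partialSum x) m)
    (fun j => measurableSet_isWeakAscLadder fun i _ => measurable_partialSum i) n
  rw [measure_forall_not_isWeakAscLadder] at h
  simp only [measureReal_def]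
  rw [← ENNReal.toReal_sum fun _ _ => measure_ne_top _ _, ← ENNReal.toReal_add (measure_ne_top _ _)
    (ENNReal.sum_ne_top.mpr fun _ _ => measure_ne_top _ _), h, ENNReal.toReal_one]

lemma measureReal_isStrictDescLadder_eq_sum [NullSingletonClass μ] [μ.IsNegInvariant] {n : ℕ}
    (hn : 1 ≤ n) :
    (Measure.infinitePi fun _ => μ).real {x | IsStrictDescLadder (partialSum x) n} =
      ∑ k ∈ range (n + 1),
        (Measure.infinitePi fun _ => μ).real {x | IsFirstHit (IsWeakAscLadder (partialSum x)) k} *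
        (Measure.infinitePi fun _ => μ).real {x | IsStrictDescLadder (partialSum x) (n - k)} := by
  simp only [measureReal_def]
  rw [measure_isStrictDescLadder_eq_sum μ hn, ENNReal.toReal_sum fun _ _ =>
    ENNReal.mul_ne_top (measure_ne_top _ _) (measure_ne_top _ _)]
  simp only [ENNReal.toReal_mul, measure_isFirstHit_isStrictDescLadder μ]

theorem integral_ladderEpoch [NullSingletonClass μ] [μ.IsNegInvariant] {s : ℝ} (hs0 : 0 ≤ s)
    (hs1 : s < 1) :
    ∫ x, (if ladderEpoch x = 0 then (0 : ℝ) else s ^ ladderEpoch x)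
      ∂(Measure.infinitePi fun _ => μ) = 1 - √(1 - s) := by
  have hG (k : ℕ) : ‖if k = 0 then (0 : ℝ) else s ^ k‖ ≤ 1 := by
    split_ifs
    · simp
    · rw [norm_pow, Real.norm_of_nonneg hs0]
      exact pow_le_one₀ hs0 hs1.le
  have hterm (k : ℕ) :
      (Measure.infinitePi fun _ => μ).real (ladderEpoch ⁻¹' {k}) * (if k = 0 then 0 else s ^ k) =
        (Measure.infinitePi fun _ => μ).real {x | IsFirstHit (IsWeakAscLadder (partialSum x)) k} *
          s ^ k := by
    rcases Nat.eq_zero_or_pos k with rfl | hk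
    · simp [IsFirstHit]
    · rw [if_neg hk.ne', show ladderEpoch ⁻¹' {k} =
        {x | IsFirstHit (IsWeakAscLadder (partialSum x)) k} from
        Set.ext fun x => firstHitTime_eq_iff hk]
  rw [integral_comp_eq_tsum _ measurable_ladderEpoch (G := fun k => if k = 0 then 0 else s ^ k) hG,
    tsum_congr hterm]
  exact tsum_mul_pow_eq_one_sub_sqrt (fun _ => measureReal_nonneg) (by simp [IsFirstHit])
    (fun _ => measureReal_nonneg)
    (fun n => by linarith [measureReal_isStrictDescLadder_add_sum μ n])
    (fun _ hn => measureReal_isStrictDescLadder_eq_sum μ hn) hs0 hs1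

end RandomWalkMeasure

end RandomWalk

open RandomWalk

/-- For an i.i.d. sequence with symmetric atomless marginal law: `P(S_n ≥ 0) = 1/2` for all
`n ≥ 1`, and the generating function of the first weak ascending ladder epoch
`T₁ = inf{n ≥ 1 : S_n ≥ S_j ∀ 0 ≤ j < n}` (with `inf ∅ = ∞`, encoded by the value `0`)
is `E[s^{T₁} 1_{T₁ < ∞}] = 1 - √(1-s)` for `s ∈ [0,1)`. -/
theorem ladder_epoch_symmetric_case
    {Ω : Type*} [MeasurableSpace Ω] (P : Measure Ω) [IsProbabilityMeasure P]
    (ξ : ℕ → Ω → ℝ)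
    (hmeas : ∀ i, Measurable (ξ i))
    (hindep : iIndepFun ξ P)
    (hident : ∀ i, Measure.map (ξ i) P = Measure.map (ξ 0) P)
    (hsymm : Measure.map (ξ 0) P = Measure.map (fun ω => -(ξ 0 ω)) P)
    (hatomless : ∀ a : ℝ, P {ω | ξ 0 ω = a} = 0)
    (S : ℕ → Ω → ℝ) (hS : ∀ k ω, S k ω = ∑ i ∈ Finset.range k, ξ i ω)
    (T : Ω → ℕ) (hT : ∀ ω, T ω = sInf {m : ℕ | 1 ≤ m ∧ ∀ j < m, S j ω ≤ S m ω}) :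
    (∀ n : ℕ, 1 ≤ n → P {ω | 0 ≤ S n ω} = 1 / 2) ∧
    (∀ s : ℝ, 0 ≤ s → s < 1 →
      ∫ ω, (if T ω = 0 then (0 : ℝ) else s ^ T ω) ∂P = 1 - Real.sqrt (1 - s)) := by
  set μ := P.map (ξ 0)
  have : IsProbabilityMeasure μ := Measure.isProbabilityMeasure_map (hmeas 0).aemeasurable
  have : NullSingletonClass μ := ⟨fun a => by
    rw [Measure.map_apply (hmeas 0) (measurableSet_singleton a)]
    exact hatomless a⟩
  have : μ.IsNegInvariant := ⟨by
    rw [Measure.neg, Measure.map_map measurable_neg (hmeas 0)]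
    exact hsymm.symm⟩
  have hX : Measurable fun ω i => ξ i ω := measurable_pi_lambda _ hmeas
  have hlaw : P.map (fun ω i => ξ i ω) = Measure.infinitePi fun _ => μ := by
    rw [hindep.map_fun_eq_infinitePi_map hmeas]
    exact congrArg Measure.infinitePi (funext hident)
  obtain rfl : S = fun k ω => partialSum (fun i => ξ i ω) k := funext₂ hS
  obtain rfl : T = fun ω => ladderEpoch (fun i => ξ i ω) := funext hT
  refine ⟨fun n hn => ?_, fun s hs0 hs1 => ?_⟩
  · rw [← measure_partialSum_nonneg μ hn, ← hlaw,
      Measure.map_apply hX (measurableSet_le measurable_const (measurable_partialSum n))]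
    rfl
  · rw [← integral_ladderEpoch μ hs0 hs1, ← hlaw]
    exact (integral_map hX.aemeasurable ((measurable_from_top
      (f := fun k : ℕ => if k = 0 then (0 : ℝ) else s ^ k)).comp
        measurable_ladderEpoch).aestronglyMeasurable).symm
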